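/- Let W be a finite type with decidable equality and let G be a simple graph on W × Fin 2 with at least one edge such that for all w, w' : W, if G.Adj (w,0) (w',1) then G.Adj (w,1) (w',0) (i.e., whenever an edge joins a vertex with odd second label to a vertex with even second label, the edge obtained by shifting the odd label up by one and the even label down by one is also present). Then the graph Laplacian state ρ_G is separable (as a state on ℂ^W ⊗ ℂ²). -/

import Mathlib

/-!
Write the Laplacian as half the sum of the edge Laplacians `(e_x - e_y)(e_x - e_y)ᵀ` over ordered
adjacent pairs. An edge inside a level `W × {i}` contributes `(e_w - e_w')(e_w - e_w')ᵀ ⊗ e_i e_iᵀ`.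
By the hypothesis, a cross edge `(w,0) ~ (w',1)` comes with its partner `(w,1) ~ (w',0)`, and for
`u = a ⊗ e₀ - b ⊗ e₁`, `v = a ⊗ e₁ - b ⊗ e₀`
`2 (u uᵀ + v vᵀ) = (a - b)(a - b)ᵀ ⊗ (e₀ + e₁)(e₀ + e₁)ᵀ + (a + b)(a + b)ᵀ ⊗ (e₀ - e₁)(e₀ - e₁)ᵀ`.
So the Laplacian is a sum of Kronecker products of positive semidefinite matrices, and normalising
each factor to trace one turns this into a convex combination of product states.
-/

open Matrix Kronecker ComplexOrder

noncomputable section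

/-- A density matrix: positive semidefinite with trace 1. -/
def IsDensityMatrix {n : Type*} [Fintype n] (ρ : Matrix n n ℂ) : Prop :=
  ρ.PosSemidef ∧ ρ.trace = 1

/-- Separability of a bipartite density matrix: a convex combination of Kronecker
products of density matrices of the subsystems. -/
def Separable {α β : Type*} [Fintype α] [Fintype β]
    (ρ : Matrix (α × β) (α × β) ℂ) : Prop :=
  ∃ (n : ℕ) (p : Fin n → ℝ) (σ : Fin n → Matrix α α ℂ) (τ : Fin n → Matrix β β ℂ),
    (∀ k, 0 ≤ p k) ∧ (∑ k, p k = 1) ∧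
    (∀ k, (σ k).PosSemidef ∧ (σ k).trace = 1) ∧
    (∀ k, (τ k).PosSemidef ∧ (τ k).trace = 1) ∧
    ρ = ∑ k, (p k : ℂ) • (σ k ⊗ₖ τ k)

/-- The `(x,y)`-block of a bipartite matrix. -/
def matBlock {α β : Type*} (ρ : Matrix (α × β) (α × β) ℂ) (x y : α) :
    Matrix β β ℂ :=
  Matrix.of fun j l => ρ (x, j) (y, l)

/-- The graph Laplacian quantum state of a simple graph. -/
def lapState {V : Type*} [Fintype V] [DecidableEq V] (G : SimpleGraph V)
    [DecidableRel G.Adj] : Matrix V V ℂ :=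
  ((2 * G.edgeFinset.card : ℂ))⁻¹ • G.lapMatrix ℂ

section Separability

variable {α β : Type*} [Fintype α] [Fintype β]

lemma Matrix.PosSemidef.trace_eq_re {M : Matrix α α ℂ} (hM : M.PosSemidef) :
    M.trace = (M.trace.re : ℂ) :=
  Complex.eq_re_of_ofReal_le (by rw [Complex.ofReal_zero]; exact hM.trace_nonneg)

lemma exists_isDensityMatrix [Nonempty α] : ∃ σ : Matrix α α ℂ, IsDensityMatrix σ := by
  classical
  obtain ⟨i⟩ := ‹Nonempty α›
  exact ⟨vecMulVec (Pi.single i 1) (star (Pi.single i 1)), posSemidef_vecMulVec_self_star _,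
    by simp [trace, vecMulVec, Pi.single_apply]⟩

lemma Matrix.PosSemidef.exists_eq_trace_smul_isDensityMatrix [Nonempty α] {M : Matrix α α ℂ}
    (hM : M.PosSemidef) : ∃ σ, IsDensityMatrix σ ∧ M = (M.trace.re : ℂ) • σ := by
  by_cases h : M.trace = 0
  · obtain ⟨σ, hσ⟩ := exists_isDensityMatrix (α := α)
    exact ⟨σ, hσ, by simp [hM.trace_eq_zero_iff.mp h]⟩
  · refine ⟨M.trace⁻¹ • M, ⟨hM.smul (inv_nonneg.mpr hM.trace_nonneg), ?_⟩, ?_⟩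
    · rw [trace_smul, smul_eq_mul, inv_mul_cancel₀ h]
    · rw [smul_smul, ← hM.trace_eq_re, mul_inv_cancel₀ h, one_smul]

theorem separable_of_eq_sum_kronecker {K : Type*} [Fintype K] {ρ : Matrix (α × β) (α × β) ℂ}
    (hρ : ρ.trace = 1) (M : K → Matrix α α ℂ) (N : K → Matrix β β ℂ)
    (hM : ∀ k, (M k).PosSemidef) (hN : ∀ k, (N k).PosSemidef)
    (hsum : ρ = ∑ k, M k ⊗ₖ N k) : Separable ρ := by
  obtain ⟨⟨a, b⟩⟩ : Nonempty (α × β) := by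
    by_contra h
    rw [not_nonempty_iff] at h
    simp [trace_eq_zero_of_isEmpty] at hρ
  have : Nonempty α := ⟨a⟩
  have : Nonempty β := ⟨b⟩
  choose σ hσ hMσ using fun k => (hM k).exists_eq_trace_smul_isDensityMatrix
  choose τ hτ hNτ using fun k => (hN k).exists_eq_trace_smul_isDensityMatrix
  set p : K → ℝ := fun k => (M k).trace.re * (N k).trace.re
  have hterm : ∀ k, M k ⊗ₖ N k = (p k : ℂ) • (σ k ⊗ₖ τ k) := fun k => by
    rw [Complex.ofReal_mul, ← smul_smul, ← kronecker_smul, ← smul_kronecker, ← hMσ, ← hNτ]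
  have hp : ∀ k, (p k : ℂ) = (M k ⊗ₖ N k).trace := fun k => by
    rw [trace_kronecker, (hM k).trace_eq_re, (hN k).trace_eq_re, Complex.ofReal_mul]
  let e := (Fintype.equivFin K).symm
  refine ⟨Fintype.card K, p ∘ e, σ ∘ e, τ ∘ e, fun k => ?_, ?_, fun k => hσ (e k),
    fun k => hτ (e k), ?_⟩
  · exact mul_nonneg (Complex.nonneg_iff.mp (hM _).trace_nonneg).1
      (Complex.nonneg_iff.mp (hN _).trace_nonneg).1
  · rw [Function.comp_def, e.sum_comp p]
    exact_mod_cast (show ((∑ k, p k : ℝ) : ℂ) = 1 by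
      rw [Complex.ofReal_sum, Finset.sum_congr rfl fun k _ => hp k, ← trace_sum, ← hsum, hρ])
  · rw [hsum, ← e.sum_comp]
    exact Finset.sum_congr rfl fun k _ => hterm (e k)

end Separability

section VecKronecker

variable {R α β : Type*} [CommRing R]

def vecKronecker (a : α → R) (s : β → R) : α × β → R := fun p => a p.1 * s p.2

theorem vecMulVec_vecKronecker (a b : α → R) (s t : β → R) :
    vecMulVec (vecKronecker a s) (vecKronecker b t) = vecMulVec a b ⊗ₖ vecMulVec s t := by
  ext ⟨x, k⟩ ⟨y, l⟩
  simp only [vecMulVec_apply, vecKronecker, kroneckerMap_apply]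
  ring

theorem vecKronecker_sub_vecKronecker (a b : α → R) (s : β → R) :
    vecKronecker a s - vecKronecker b s = vecKronecker (a - b) s := by
  ext p
  simp only [vecKronecker, Pi.sub_apply]
  ring

theorem Pi.single_prod_eq_vecKronecker [DecidableEq α] [DecidableEq β] (a : α) (b : β) :
    Pi.single (a, b) (1 : R) = vecKronecker (Pi.single a 1) (Pi.single b 1) := by
  ext ⟨x, k⟩
  simp only [vecKronecker, Pi.single_apply, Prod.mk.injEq, ite_and, mul_ite, mul_one, mul_zero]
  split_ifs <;> rfl

theorem two_smul_vecMulVec_add_vecMulVec_swap (a b : α → R) (s t : β → R) :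
    (2 : R) • (vecMulVec (vecKronecker a s - vecKronecker b t) (vecKronecker a s - vecKronecker b t)
      + vecMulVec (vecKronecker a t - vecKronecker b s) (vecKronecker a t - vecKronecker b s)) =
    vecMulVec (a - b) (a - b) ⊗ₖ vecMulVec (s + t) (s + t)
      + vecMulVec (a + b) (a + b) ⊗ₖ vecMulVec (s - t) (s - t) := by
  ext ⟨x, k⟩ ⟨y, l⟩
  simp only [Matrix.smul_apply, Matrix.add_apply, vecMulVec_apply, vecKronecker, kroneckerMap_apply,
    Pi.sub_apply, Pi.add_apply, smul_eq_mul]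
  ring

end VecKronecker

theorem Matrix.posSemidef_vecMulVec_self {n : Type*} [Fintype n] {v : n → ℂ} (hv : star v = v) :
    (vecMulVec v v).PosSemidef := by
  simpa only [hv] using posSemidef_vecMulVec_self_star v

namespace SimpleGraph

variable {V : Type*} [Fintype V] [DecidableEq V] (G : SimpleGraph V) [DecidableRel G.Adj]

theorem trace_lapMatrix (R : Type*) [Ring R] : (G.lapMatrix R).trace = 2 * G.edgeFinset.card := by
  simp [lapMatrix, degMatrix, trace_sub, trace_adjMatrix, ← Nat.cast_sum,
    sum_degrees_eq_twice_card_edges]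

def edgeLapMatrix (R : Type*) [Ring R] (x y : V) : Matrix V V R :=
  if G.Adj x y then vecMulVec (Pi.single x 1 - Pi.single y 1) (Pi.single x 1 - Pi.single y 1)
  else 0

theorem two_smul_lapMatrix_eq_sum (R : Type*) [CommRing R] :
    (2 : R) • G.lapMatrix R = ∑ x, ∑ y, G.edgeLapMatrix R x y := by
  ext u v
  simp only [edgeLapMatrix, Matrix.sum_apply, apply_ite (fun M : Matrix V V R => M u v),
    vecMulVec_apply, Pi.sub_apply, Pi.single_apply, Matrix.zero_apply, mul_sub, mul_ite, mul_one,
    mul_zero]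
  by_cases h : u = v
  · subst h
    simp [Finset.sum_ite, lapMatrix, degMatrix, ← neighborFinset_eq_filter, G.adj_comm _ u]
    ring
  · simp [Finset.sum_ite, lapMatrix, degMatrix, h, G.adj_comm v u]
    split_ifs <;> norm_num

theorem trace_lapState (hE : G.edgeFinset.Nonempty) : (lapState G).trace = 1 := by
  have : (2 * G.edgeFinset.card : ℂ) ≠ 0 := by simpa using hE.card_pos.ne'
  rw [lapState, trace_smul, G.trace_lapMatrix, smul_eq_mul, inv_mul_cancel₀ this]

end SimpleGraph

theorem Fintype.sum_sum_prod_fin_two {W M : Type*} [Fintype W] [AddCommMonoid M]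
    (f : W × Fin 2 → W × Fin 2 → M) :
    ∑ x, ∑ y, f x y = ∑ w, ∑ w', (f (w, 0) (w', 0) + f (w, 1) (w', 1)
      + (f (w, 0) (w', 1) + f (w, 1) (w', 0))) := by
  simp only [Fintype.sum_prod_type, Fin.sum_univ_two, Finset.sum_add_distrib]
  abel

section OddEvenPairing

variable {W : Type*} [DecidableEq W] (G : SimpleGraph (W × Fin 2)) [DecidableRel G.Adj]

-- `t` indexes the level-0 edge, the level-1 edge and the two polarization terms of the cross pair.
def siteFactor (w w' : W) : Fin 4 → Matrix W W ℂ :=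
  let d : W → ℂ := Pi.single w 1 - Pi.single w' 1
  let s : W → ℂ := Pi.single w 1 + Pi.single w' 1
  ![if G.Adj (w, 0) (w', 0) then (2 : ℂ) • vecMulVec d d else 0,
    if G.Adj (w, 1) (w', 1) then (2 : ℂ) • vecMulVec d d else 0,
    if G.Adj (w, 0) (w', 1) then vecMulVec d d else 0,
    if G.Adj (w, 0) (w', 1) then vecMulVec s s else 0]

def qubitFactor : Fin 4 → Matrix (Fin 2) (Fin 2) ℂ :=
  let e₀ : Fin 2 → ℂ := Pi.single 0 1
  let e₁ : Fin 2 → ℂ := Pi.single 1 1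
  ![vecMulVec e₀ e₀, vecMulVec e₁ e₁, vecMulVec (e₀ + e₁) (e₀ + e₁),
    vecMulVec (e₀ - e₁) (e₀ - e₁)]

theorem two_smul_edgeLapMatrix_block_eq
    (hAdj : ∀ w w' : W, G.Adj (w, 0) (w', 1) → G.Adj (w, 1) (w', 0)) (w w' : W) :
    (2 : ℂ) • (G.edgeLapMatrix ℂ (w, 0) (w', 0) + G.edgeLapMatrix ℂ (w, 1) (w', 1)
      + (G.edgeLapMatrix ℂ (w, 0) (w', 1) + G.edgeLapMatrix ℂ (w, 1) (w', 0))) =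
      ∑ t, siteFactor G w w' t ⊗ₖ qubitFactor t := by
  have hcross : G.Adj (w, 1) (w', 0) ↔ G.Adj (w, 0) (w', 1) :=
    ⟨fun h => (hAdj w' w h.symm).symm, hAdj w w'⟩
  simp only [SimpleGraph.edgeLapMatrix, hcross, Pi.single_prod_eq_vecKronecker,
    vecKronecker_sub_vecKronecker, vecMulVec_vecKronecker, Fin.sum_univ_four, siteFactor,
    qubitFactor, Matrix.cons_val_zero, Matrix.cons_val_one, Matrix.cons_val_two,
    Matrix.cons_val_three, Matrix.head_cons, Matrix.tail_cons]
  rw [smul_add, ← ite_add_zero, smul_ite, two_smul_vecMulVec_add_vecMulVec_swap, smul_zero]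
  split_ifs <;> simp only [smul_add, smul_kronecker, zero_kronecker, smul_zero, add_zero, zero_add,
    add_assoc]

variable [Fintype W]

theorem posSemidef_siteFactor (w w' : W) (t : Fin 4) : (siteFactor G w w' t).PosSemidef := by
  have hd := posSemidef_vecMulVec_self (v := Pi.single w 1 - Pi.single w' 1)
    (by simp [Pi.star_single])
  have hs := posSemidef_vecMulVec_self (v := Pi.single w 1 + Pi.single w' 1)
    (by simp [Pi.star_single])
  fin_cases t <;> simp only [siteFactor] <;> split_ifs
  all_goals first | exact .zero | exact hd | exact hs | exact hd.smul (by norm_num)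

theorem posSemidef_qubitFactor (t : Fin 4) : (qubitFactor t).PosSemidef := by
  fin_cases t <;> exact posSemidef_vecMulVec_self (by simp [Pi.star_single])

theorem four_smul_lapMatrix_eq_sum
    (hAdj : ∀ w w' : W, G.Adj (w, 0) (w', 1) → G.Adj (w, 1) (w', 0)) :
    (4 : ℂ) • G.lapMatrix ℂ = ∑ w, ∑ w', ∑ t, siteFactor G w w' t ⊗ₖ qubitFactor t := by
  rw [show (4 : ℂ) = 2 * 2 by norm_num, mul_smul, G.two_smul_lapMatrix_eq_sum,
    Fintype.sum_sum_prod_fin_two]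
  simp only [Finset.smul_sum, two_smul_edgeLapMatrix_block_eq G hAdj]

end OddEvenPairing

theorem odd_even_edge_pairing_separable_general
    {W : Type*} [Fintype W] [DecidableEq W]
    (G : SimpleGraph (W × Fin 2)) [DecidableRel G.Adj]
    (hE : G.edgeFinset.Nonempty)
    (hAdj : ∀ w w' : W, G.Adj (w, 0) (w', 1) → G.Adj (w, 1) (w', 0)) :
    Separable (lapState G) := by
  have hcard : (G.edgeFinset.card : ℂ) ≠ 0 := by simpa using hE.card_pos.ne'
  refine separable_of_eq_sum_kronecker (G.trace_lapState hE)
    (fun q : W × W × Fin 4 => (8 * G.edgeFinset.card : ℂ)⁻¹ • siteFactor G q.1 q.2.1 q.2.2)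
    (fun q => qubitFactor q.2.2)
    (fun q => (posSemidef_siteFactor G _ _ _).smul (inv_nonneg.mpr (by positivity)))
    (fun q => posSemidef_qubitFactor _) ?_
  calc lapState G = (8 * G.edgeFinset.card : ℂ)⁻¹ • ((4 : ℂ) • G.lapMatrix ℂ) := by
        rw [lapState, smul_smul]
        congr 1
        field_simp
        norm_num
    _ = _ := by
        simp only [four_smul_lapMatrix_eq_sum G hAdj, Finset.smul_sum, smul_kronecker,
          Fintype.sum_prod_type]

theorem odd_even_edge_pairing_separable
    {W : Type*} [Fintype W] [DecidableEq W] [Nonempty W]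
    (G : SimpleGraph (W × Fin 2)) [DecidableRel G.Adj]
    (hE : G.edgeFinset.Nonempty)
    (hAdj : ∀ w w' : W, G.Adj (w, 0) (w', 1) → G.Adj (w, 1) (w', 0)) :
    Separable (lapState G) :=
  odd_even_edge_pairing_separable_general G hE hAdj
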